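/- Let m and n be positive multiples of 11 (so in particular m, n ≥ 11). Then the λ-number of the strong product C_m ⊠ C_n of the cycles C_m and C_n equals 10. -/

import Mathlib

/-!
Lower bound: the neighbours of a vertex `v` get pairwise distinct labels (any two are within
distance two of each other through `v`), all differing from the label of `v` by at least 2. If all
labels lie in a window of 10 consecutive values and the label of `v` is not an end of the window,
at most 7 values remain for the 8 neighbours. So every label is an end of the window, which is
impossible on a triangle.

Upper bound: the labeling `(x, y) ↦ 2x + 5y mod 11`.
-/

/-- The path graph `P_m` on vertices `0, …, m-1`. -/
def pathG (m : ℕ) : SimpleGraph (Fin m) where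
  Adj i j := (i : ℕ) + 1 = (j : ℕ) ∨ (j : ℕ) + 1 = (i : ℕ)
  symm := ⟨fun i j h => h.symm⟩
  loopless := ⟨by intro i h; rcases h with h | h <;> omega⟩

/-- The cycle graph `C_n` on vertices `0, …, n-1` (as `ZMod n`). -/
def cycleG (n : ℕ) : SimpleGraph (ZMod n) where
  Adj u v := u ≠ v ∧ (v = u + 1 ∨ u = v + 1)
  symm := ⟨fun u v ⟨h1, h2⟩ => ⟨h1.symm, h2.symm⟩⟩
  loopless := ⟨fun u h => h.1 rfl⟩

/-- The strong product `G ⊠ H`. -/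
def strongProd {α β : Type*} (G : SimpleGraph α) (H : SimpleGraph β) :
    SimpleGraph (α × β) where
  Adj u v :=
    (u.1 = v.1 ∧ H.Adj u.2 v.2) ∨ (u.2 = v.2 ∧ G.Adj u.1 v.1) ∨
    (G.Adj u.1 v.1 ∧ H.Adj u.2 v.2)
  symm := ⟨by
    rintro u v (⟨h1, h2⟩ | ⟨h1, h2⟩ | ⟨h1, h2⟩)
    · exact Or.inl ⟨h1.symm, h2.symm⟩
    · exact Or.inr (Or.inl ⟨h1.symm, h2.symm⟩)
    · exact Or.inr (Or.inr ⟨h1.symm, h2.symm⟩)⟩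
  loopless := ⟨by
    rintro u (⟨-, h⟩ | ⟨-, h⟩ | ⟨h, -⟩)
    · exact H.loopless.irrefl _ h
    · exact G.loopless.irrefl _ h
    · exact G.loopless.irrefl _ h⟩

/-- `f` is an `L(2,1)`-labeling of `G`: labels of adjacent vertices differ by at least 2,
labels of vertices at distance 2 differ by at least 1. -/
def IsL21Labeling {V : Type*} (G : SimpleGraph V) (f : V → ℕ) : Prop :=
  (∀ u v, G.Adj u v → 2 ≤ |(f u : ℤ) - (f v : ℤ)|) ∧
  (∀ u v, G.dist u v = 2 → 1 ≤ |(f u : ℤ) - (f v : ℤ)|)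

/-- The span of a labeling: largest label minus smallest label. -/
noncomputable def spanOf {V : Type*} (f : V → ℕ) : ℕ :=
  sSup (Set.range f) - sInf (Set.range f)

/-- The `λ`-number of `G`: the minimum span over all `L(2,1)`-labelings of `G`. -/
noncomputable def lambdaNumber {V : Type*} (G : SimpleGraph V) : ℕ :=
  sInf { s : ℕ | ∃ f : V → ℕ, IsL21Labeling G f ∧ spanOf f = s }

open SimpleGraph

theorem SimpleGraph.dist_eq_two_iff {V : Type*} {G : SimpleGraph V} {u v : V} :
    G.dist u v = 2 ↔ u ≠ v ∧ ¬G.Adj u v ∧ (G.commonNeighbors u v).Nonempty := by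
  rw [dist, ENat.toNat_eq_iff two_ne_zero]
  exact edist_eq_two_iff

section Labelings

variable {V : Type*} {G : SimpleGraph V} {f : V → ℕ}

theorem spanOf_le {B : ℕ} (h : ∀ x, f x ≤ B) : spanOf f ≤ B :=
  (Nat.sub_le _ _).trans (csSup_le' (by rintro _ ⟨x, rfl⟩; exact h x))

theorem mem_Icc_sInf_add_spanOf [Finite V] (x : V) :
    f x ∈ Set.Icc (sInf (Set.range f)) (sInf (Set.range f) + spanOf f) := by
  have hInf : sInf (Set.range f) ≤ f x := Nat.sInf_le ⟨x, rfl⟩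
  have hSup : f x ≤ sSup (Set.range f) := le_csSup (Set.finite_range f).bddAbove ⟨x, rfl⟩
  unfold spanOf
  constructor <;> omega

theorem lambdaNumber_eq {f₀ : V → ℕ} {k : ℕ} (hf₀ : IsL21Labeling G f₀) (hspan : spanOf f₀ ≤ k)
    (hlower : ∀ f, IsL21Labeling G f → k ≤ spanOf f) : lambdaNumber G = k :=
  le_antisymm ((Nat.sInf_le ⟨f₀, hf₀, rfl⟩ : lambdaNumber G ≤ spanOf f₀).trans hspan)
    (le_csInf ⟨_, f₀, hf₀, rfl⟩ (by rintro _ ⟨f, hf, rfl⟩; exact hlower f hf))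

namespace IsL21Labeling

theorem add_two_le_or_add_two_le (hf : IsL21Labeling G f) {u v : V} (h : G.Adj u v) :
    f u + 2 ≤ f v ∨ f v + 2 ≤ f u := by
  have := hf.1 u v h
  rw [le_abs'] at this
  omega

theorem injOn_neighborSet (hf : IsL21Labeling G f) (v : V) : Set.InjOn f (G.neighborSet v) := by
  intro a ha b hb hab
  by_contra hne
  by_cases hadj : G.Adj a b
  · have := hf.add_two_le_or_add_two_le hadj
    omega
  · have := hf.2 a b (dist_eq_two_iff.2 ⟨hne, hadj, v, ha.symm, hb.symm⟩)
    rw [hab, sub_self, abs_zero] at this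
    omega

theorem eq_or_eq_of_ncard_neighborSet (hf : IsL21Labeling G f) {L k : ℕ} (hL : ∀ x, L ≤ f x)
    (hk : ∀ x, f x ≤ L + k) {v : V} (hv : k - 1 ≤ (G.neighborSet v).ncard) :
    f v = L ∨ f v = L + k := by
  by_contra hend
  have hsub : f '' G.neighborSet v ⊆ ↑(Finset.Ico L (f v - 1) ∪ Finset.Icc (f v + 2) (L + k)) := by
    rintro _ ⟨u, hu, rfl⟩
    have := hf.add_two_le_or_add_two_le hu
    have := hL u
    have := hk u
    simp only [Finset.coe_union, Finset.coe_Icc, Finset.coe_Ico, Set.mem_union, Set.mem_Icc,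
      Set.mem_Ico]
    omega
  have hcard := (Set.ncard_le_ncard hsub).trans_eq (Set.ncard_coe_finset _)
  rw [(hf.injOn_neighborSet v).ncard_image] at hcard
  have hunion := hcard.trans (Finset.card_union_le _ _)
  simp only [Nat.card_Icc, Nat.card_Ico] at hunion
  have := hL v
  have := hk v
  omega

theorem add_two_le_spanOf [Finite V] (hf : IsL21Labeling G f) {u v w : V} (huv : G.Adj u v)
    (hvw : G.Adj v w) (huw : G.Adj u w) {d : ℕ} (hu : d ≤ (G.neighborSet u).ncard)
    (hv : d ≤ (G.neighborSet v).ncard) (hw : d ≤ (G.neighborSet w).ncard) :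
    d + 2 ≤ spanOf f := by
  by_contra! hspan
  have hL x := (mem_Icc_sInf_add_spanOf (f := f) x).1
  have hk x := (mem_Icc_sInf_add_spanOf (f := f) x).2
  have := hf.eq_or_eq_of_ncard_neighborSet hL hk (v := u) (by omega)
  have := hf.eq_or_eq_of_ncard_neighborSet hL hk (v := v) (by omega)
  have := hf.eq_or_eq_of_ncard_neighborSet hL hk (v := w) (by omega)
  have := hf.add_two_le_or_add_two_le huv
  have := hf.add_two_le_or_add_two_le hvw
  have := hf.add_two_le_or_add_two_le huw
  omega

end IsL21Labeling

end Labelings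

section StrongProduct

variable {α β : Type*} {G : SimpleGraph α} {H : SimpleGraph β}

theorem strongProd_adj_iff {p q : α × β} :
    (strongProd G H).Adj p q ↔
      p ≠ q ∧ (p.1 = q.1 ∨ G.Adj p.1 q.1) ∧ (p.2 = q.2 ∨ H.Adj p.2 q.2) := by
  have hG : G.Adj p.1 q.1 → p.1 ≠ q.1 := G.ne_of_adj
  have hH : H.Adj p.2 q.2 → p.2 ≠ q.2 := H.ne_of_adj
  simp only [strongProd, ne_eq, Prod.ext_iff]
  tauto

theorem insert_neighborSet_strongProd (p : α × β) :
    insert p ((strongProd G H).neighborSet p) =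
      insert p.1 (G.neighborSet p.1) ×ˢ insert p.2 (H.neighborSet p.2) := by
  ext q
  simp only [Set.mem_insert_iff, mem_neighborSet, strongProd_adj_iff, Set.mem_prod,
    Prod.ext_iff]
  grind

end StrongProduct

section Cycles

variable {n : ℕ}

theorem cycleG_adj_add_one (hn : n ≠ 1) (x : ZMod n) : (cycleG n).Adj x (x + 1) :=
  ⟨by simpa using ZMod.one_eq_zero_iff.not.2 hn, Or.inl rfl⟩

theorem insert_neighborSet_cycleG (x : ZMod n) :
    insert x ((cycleG n).neighborSet x) = {x, x + 1, x - 1} := by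
  ext y
  simp only [Set.mem_insert_iff, mem_neighborSet, cycleG, Set.mem_singleton_iff,
    eq_sub_iff_add_eq]
  grind

theorem ZMod.ncard_self_add_one_sub_one (hn : 3 ≤ n) (x : ZMod n) :
    ({x, x + 1, x - 1} : Set (ZMod n)).ncard = 3 := by
  have h₁ : (1 : ZMod n) ≠ 0 := ZMod.one_eq_zero_iff.not.2 (by omega)
  have h₂ : (2 : ZMod n) ≠ 0 := by
    simpa using (ZMod.natCast_eq_zero_iff 2 n).not.2 (Nat.not_dvd_of_pos_of_lt two_pos hn)
  refine Set.ncard_eq_three.2 ⟨_, _, _, ?_, ?_, ?_, rfl⟩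
  · simpa using h₁
  · simpa [eq_sub_iff_add_eq] using h₁
  · intro h
    apply h₂
    linear_combination h

theorem ncard_neighborSet_strongProd_cycleG {m : ℕ} (hm : 3 ≤ m) (hn : 3 ≤ n)
    (p : ZMod m × ZMod n) : ((strongProd (cycleG m) (cycleG n)).neighborSet p).ncard = 8 := by
  have : NeZero m := ⟨by omega⟩
  have : NeZero n := ⟨by omega⟩
  have h9 := congrArg Set.ncard (insert_neighborSet_strongProd (G := cycleG m) (H := cycleG n) p)
  rw [Set.ncard_prod, insert_neighborSet_cycleG, insert_neighborSet_cycleG,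
    ZMod.ncard_self_add_one_sub_one hm, ZMod.ncard_self_add_one_sub_one hn,
    Set.ncard_insert_of_notMem (notMem_neighborSet_self _)] at h9
  omega

theorem exists_intCast_of_eq_or_cycleG_adj {x y : ZMod n} (h : x = y ∨ (cycleG n).Adj x y) :
    ∃ s : ℤ, |s| ≤ 1 ∧ y = x + s := by
  rcases h with rfl | ⟨-, rfl | rfl⟩
  · exact ⟨0, by simp⟩
  · exact ⟨1, by simp⟩
  · exact ⟨-1, by simp⟩

theorem exists_intCast_of_strongProd_cycleG_adj {m : ℕ} {p q : ZMod m × ZMod n}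
    (h : (strongProd (cycleG m) (cycleG n)).Adj p q) :
    ∃ s t : ℤ, |s| ≤ 1 ∧ |t| ≤ 1 ∧ q = p + ((s : ZMod m), (t : ZMod n)) := by
  obtain ⟨-, h₁, h₂⟩ := strongProd_adj_iff.1 h
  obtain ⟨s, hs, e₁⟩ := exists_intCast_of_eq_or_cycleG_adj h₁
  obtain ⟨t, ht, e₂⟩ := exists_intCast_of_eq_or_cycleG_adj h₂
  exact ⟨s, t, hs, ht, Prod.ext e₁ e₂⟩

end Cycles

theorem ZMod.val_add_intCast_sub_val_modEq {N : ℕ} [NeZero N] (a : ZMod N) (s : ℤ) :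
    ((a + s).val : ℤ) - a.val ≡ s [ZMOD N] :=
  (ZMod.intCast_eq_intCast_iff _ _ N).1 (by push_cast [ZMod.natCast_val, ZMod.cast_id]; ring)

theorem le_abs_val_sub_val_add_intCast (a : ZMod 11) (k : ℤ) {c : ℤ} (h₁ : c ≤ k % 11)
    (h₂ : k % 11 ≤ 11 - c) : c ≤ |(a.val : ℤ) - (a + k).val| := by
  have hk := ZMod.val_add_intCast_sub_val_modEq a k
  have := ZMod.val_lt a
  have := ZMod.val_lt (a + (k : ZMod 11))
  rw [Int.ModEq] at hk
  rw [le_abs']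
  generalize k % 11 = r at *
  omega

section LabelMod11

variable {m n : ℕ}

/-- A step to a neighbour changes `2x + 5y` by `±2, ±3, ±5` or `±7`, a residue outside `{-1, 0, 1}`
modulo 11, and two such steps cancel modulo 11 only if they cancel outright. -/
def labelMod11 (hm : 11 ∣ m) (hn : 11 ∣ n) (p : ZMod m × ZMod n) : ZMod 11 :=
  2 * ZMod.castHom hm (ZMod 11) p.1 + 5 * ZMod.castHom hn (ZMod 11) p.2

theorem labelMod11_add_intCast (hm : 11 ∣ m) (hn : 11 ∣ n) (p : ZMod m × ZMod n) (s t : ℤ) :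
    labelMod11 hm hn (p + ((s : ZMod m), (t : ZMod n))) =
      labelMod11 hm hn p + ((2 * s + 5 * t : ℤ) : ZMod 11) := by
  simp only [labelMod11, Prod.fst_add, Prod.snd_add, map_add, map_intCast]
  push_cast
  ring

theorem two_le_emod_eleven {s t : ℤ} (hs : |s| ≤ 1) (ht : |t| ≤ 1) (hst : s ≠ 0 ∨ t ≠ 0) :
    2 ≤ (2 * s + 5 * t) % 11 ∧ (2 * s + 5 * t) % 11 ≤ 9 := by
  obtain ⟨hs₁, hs₂⟩ := abs_le.1 hs
  obtain ⟨ht₁, ht₂⟩ := abs_le.1 ht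
  interval_cases s <;> interval_cases t <;> omega

theorem emod_eleven_ne_zero {s t : ℤ} (hs : |s| ≤ 2) (ht : |t| ≤ 2) (hst : s ≠ 0 ∨ t ≠ 0) :
    (2 * s + 5 * t) % 11 ≠ 0 := by
  obtain ⟨hs₁, hs₂⟩ := abs_le.1 hs
  obtain ⟨ht₁, ht₂⟩ := abs_le.1 ht
  interval_cases s <;> interval_cases t <;> omega

theorem isL21Labeling_labelMod11 (hm : 11 ∣ m) (hn : 11 ∣ n) :
    IsL21Labeling (strongProd (cycleG m) (cycleG n)) fun p => (labelMod11 hm hn p).val := by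
  constructor
  · intro u v huv
    obtain ⟨s, t, hs, ht, rfl⟩ := exists_intCast_of_strongProd_cycleG_adj huv
    have hst : s ≠ 0 ∨ t ≠ 0 := by
      contrapose! huv
      simp [huv.1, huv.2, Prod.mk_zero_zero]
    have := two_le_emod_eleven hs ht hst
    dsimp only
    rw [labelMod11_add_intCast]
    exact le_abs_val_sub_val_add_intCast _ _ (by omega) (by omega)
  · intro u v huv
    obtain ⟨hne, -, w, huw, hvw⟩ := dist_eq_two_iff.1 huv
    obtain ⟨s₁, t₁, hs₁, ht₁, rfl⟩ := exists_intCast_of_strongProd_cycleG_adj huw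
    obtain ⟨s₂, t₂, hs₂, ht₂, hw⟩ := exists_intCast_of_strongProd_cycleG_adj hvw
    have hv : v = u + (((s₁ - s₂ : ℤ) : ZMod m), ((t₁ - t₂ : ℤ) : ZMod n)) := by
      obtain ⟨h₁, h₂⟩ := Prod.ext_iff.1 hw
      simp only [Prod.fst_add, Prod.snd_add] at h₁ h₂
      refine Prod.ext ?_ ?_ <;> simp only [Prod.fst_add, Prod.snd_add] <;> push_cast
      · linear_combination -h₁
      · linear_combination -h₂
    subst hv
    have hst : s₁ - s₂ ≠ 0 ∨ t₁ - t₂ ≠ 0 := by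
      contrapose! hne
      simp [hne.1, hne.2, Prod.mk_zero_zero]
    have := emod_eleven_ne_zero ((abs_sub _ _).trans (by linarith))
      ((abs_sub _ _).trans (by linarith)) hst
    dsimp only
    rw [labelMod11_add_intCast]
    exact le_abs_val_sub_val_add_intCast _ _ (by omega) (by omega)

end LabelMod11

theorem ten_le_spanOf_strongProd_cycleG {m n : ℕ} (hm : 3 ≤ m) (hn : 3 ≤ n)
    {f : ZMod m × ZMod n → ℕ} (hf : IsL21Labeling (strongProd (cycleG m) (cycleG n)) f) :
    10 ≤ spanOf f := by
  have : NeZero m := ⟨by omega⟩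
  have : NeZero n := ⟨by omega⟩
  have hm₁ : (cycleG m).Adj 0 1 := by simpa using cycleG_adj_add_one (by omega) (0 : ZMod m)
  have hn₁ : (cycleG n).Adj 0 1 := by simpa using cycleG_adj_add_one (by omega) (0 : ZMod n)
  have h₁ : (strongProd (cycleG m) (cycleG n)).Adj (0, 0) (1, 0) :=
    strongProd_adj_iff.2 ⟨fun h => hm₁.ne (congrArg Prod.fst h), Or.inr hm₁, Or.inl rfl⟩
  have h₂ : (strongProd (cycleG m) (cycleG n)).Adj (1, 0) (0, 1) :=
    strongProd_adj_iff.2 ⟨fun h => hm₁.ne (congrArg Prod.fst h).symm, Or.inr hm₁.symm, Or.inr hn₁⟩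
  have h₃ : (strongProd (cycleG m) (cycleG n)).Adj (0, 0) (0, 1) :=
    strongProd_adj_iff.2 ⟨fun h => hn₁.ne (congrArg Prod.snd h), Or.inl rfl, Or.inr hn₁⟩
  have h₈ := ncard_neighborSet_strongProd_cycleG hm hn
  exact hf.add_two_le_spanOf h₁ h₂ h₃ (h₈ _).ge (h₈ _).ge (h₈ _).ge

theorem lambda_strongProd_cycles_eq_ten (m n : ℕ) (hm : 11 ∣ m) (hm0 : 0 < m)
    (hn : 11 ∣ n) (hn0 : 0 < n) :
    lambdaNumber (strongProd (cycleG m) (cycleG n)) = 10 := by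
  have hm₃ : 3 ≤ m := le_trans (by norm_num) (Nat.le_of_dvd hm0 hm)
  have hn₃ : 3 ≤ n := le_trans (by norm_num) (Nat.le_of_dvd hn0 hn)
  exact lambdaNumber_eq (isL21Labeling_labelMod11 hm hn)
    (spanOf_le fun p => Nat.le_of_lt_succ (ZMod.val_lt _))
    fun f hf => ten_le_spanOf_strongProd_cycleG hm₃ hn₃ hf
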